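/- If the exponent set Γ ⊂ ℕ^n of size N ≥ 3 is contained in an affine line, then the generic polynomial P(Y, Γ) = Σ_{i=1}^N A_i Y^{γ_i} is reducible over the algebraic closure of k(A_1, ..., A_N), provided gcd of the monomials Y^{γ_i} is 1. -/

import Mathlib

/-!
Writing `γ_i = γ_{i₀} + s_i δ` with `δ` a primitive integer vector (Bézout), and shifting `s` so
that it ranges over `0, …, M`, every exponent becomes `b + m_i δ⁺ + (M - m_i) δ⁻` with `m_i`
distinct. Hence `P = Y^b F(Y^{δ⁺}, Y^{δ⁻})`, where `F` is the degree-`M` homogenization of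
`f = ∑ A_i t^{m_i}`. Since the `m_i` are `N ≥ 3` distinct naturals, `deg f ≥ 2`, so over an
algebraically closed field `f = (t - r₁)(t - r₂)h`, and `P` has the factor `Y^{δ⁺} - r₁ Y^{δ⁻}`
with a cofactor divisible by `Y^{δ⁺} - r₂ Y^{δ⁻}`; neither binomial is a unit because
`δ⁺ ≠ 0` and `δ⁺ ≠ δ⁻`.
-/

open MvPolynomial
open scoped Polynomial

lemma exists_zsmul_eq_of_mul_eq_mul {ι σ : Type*} [Fintype σ] (x : ι → σ → ℤ) (w : σ → ℤ)
    (hw : w ≠ 0) (hx : ∀ i j k, x i j * w k = x i k * w j) :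
    ∃ (δ : σ → ℤ) (s : ι → ℤ), (∃ j, 0 < δ j) ∧ ∀ i, x i = s i • δ := by
  classical
  obtain ⟨j₁, hj₁⟩ : ∃ j, w j ≠ 0 := by
    by_contra! h
    exact hw (funext h)
  set G := Finset.univ.gcd w
  set δ : σ → ℤ := fun j => w j / G
  have hG : G ≠ 0 := fun h => hj₁ (Finset.gcd_eq_zero_iff.mp h j₁ (Finset.mem_univ _))
  have hwδ : ∀ j, w j = G * δ j := fun j =>
    (Int.mul_ediv_cancel' (Finset.gcd_dvd (Finset.mem_univ j))).symm
  -- `δ` is primitive, so Bézout gives `c` with `c ⬝ δ = 1`, and `x i = (c ⬝ x i) • δ`.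
  obtain ⟨c, hc⟩ := Finset.gcd_eq_sum_mul Finset.univ δ
  rw [Finset.gcd_div_eq_one (Finset.mem_univ j₁) hj₁] at hc
  have hxδ : ∀ i, x i = (∑ k, x i k * c k) • δ := by
    intro i
    funext j
    have hcross : ∀ k, x i k * δ j = x i j * δ k := fun k =>
      mul_left_cancel₀ hG (by linear_combination x i j * hwδ k - x i k * hwδ j + hx i k j)
    calc x i j = x i j * ∑ k, δ k * c k := by rw [← hc, mul_one]
      _ = (∑ k, x i k * c k) * δ j := by
        rw [Finset.mul_sum, Finset.sum_mul]
        exact Finset.sum_congr rfl fun k _ => by linear_combination (-c k) * hcross k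
  have hδ : δ j₁ ≠ 0 := fun h => hj₁ (by rw [hwδ, h, mul_zero])
  by_cases hpos : ∃ j, 0 < δ j
  · exact ⟨δ, _, hpos, hxδ⟩
  · refine ⟨-δ, fun i => -∑ k, x i k * c k, ⟨j₁, ?_⟩, fun i => by rw [neg_smul_neg, ← hxδ]⟩
    push Not at hpos
    simpa using lt_of_le_of_ne (hpos j₁) hδ

lemma exists_eq_add_mul_of_collinear {ι σ : Type*} [Fintype σ] (γ : ι → σ → ℕ) {i₀ i₁ : ι}
    (h : γ i₁ ≠ γ i₀) (hline : Collinear ℝ (Set.range fun i j => (γ i j : ℝ))) :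
    ∃ (δ : σ → ℤ) (s : ι → ℤ), (∃ j, 0 < δ j) ∧ ∀ i j, (γ i j : ℤ) = γ i₀ j + s i * δ j := by
  rw [collinear_iff_of_mem (Set.mem_range_self i₀)] at hline
  obtain ⟨v, hv⟩ := hline
  choose t ht using fun i => hv _ (Set.mem_range_self i)
  have hx : ∀ i j, (γ i j : ℝ) - γ i₀ j = t i * v j := fun i j => by
    have := congrFun (ht i) j
    simp only [vadd_eq_add, Pi.add_apply, Pi.smul_apply, smul_eq_mul] at this
    linarith
  have hw : (fun j => (γ i₁ j - γ i₀ j : ℤ)) ≠ 0 := fun h0 =>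
    h (funext fun j => by have := congrFun h0 j; simp only [Pi.zero_apply] at this; omega)
  obtain ⟨δ, s, hδ, hs⟩ := exists_zsmul_eq_of_mul_eq_mul (fun i j => (γ i j - γ i₀ j : ℤ)) _ hw
    fun i j k => by
      have : ((γ i j : ℝ) - γ i₀ j) * (γ i₁ k - γ i₀ k) =
          ((γ i k : ℝ) - γ i₀ k) * (γ i₁ j - γ i₀ j) := by
        rw [hx, hx, hx, hx]
        ring
      exact_mod_cast this
  refine ⟨δ, s, hδ, fun i j => ?_⟩
  have := congrFun (hs i) j
  simp only [Pi.smul_apply, smul_eq_mul] at this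
  omega

lemma exists_eq_add_mul_toNat_add_mul_toNat {ι σ : Type*} [Fintype ι] [Nonempty ι]
    (γ : ι → σ → ℕ) (c δ : σ → ℤ) (s : ι → ℤ) (h : ∀ i j, (γ i j : ℤ) = c j + s i * δ j) :
    ∃ (b : σ → ℕ) (m : ι → ℕ) (M : ℕ), (∀ i, m i ≤ M) ∧
      ∀ i j, γ i j = b j + m i * (δ j).toNat + (M - m i) * (-δ j).toNat := by
  classical
  obtain ⟨imin, -, hmin⟩ := Finset.exists_min_image Finset.univ s Finset.univ_nonempty
  obtain ⟨imax, -, hmax⟩ := Finset.exists_max_image Finset.univ s Finset.univ_nonempty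
  have hle : ∀ i, (s i - s imin).toNat ≤ (s imax - s imin).toNat := fun i =>
    Int.toNat_le_toNat (by linarith [hmax i (Finset.mem_univ _)])
  -- The base point of coordinate `j` is the end of the segment where `γ · j` is smallest.
  refine ⟨fun j => if 0 ≤ δ j then γ imin j else γ imax j, fun i => (s i - s imin).toNat,
    (s imax - s imin).toNat, hle, fun i j => ?_⟩
  have hlo := hmin i (Finset.mem_univ _)
  have hhi := hmax i (Finset.mem_univ _)
  have hm : ((s i - s imin).toNat : ℤ) = s i - s imin := Int.toNat_of_nonneg (by omega)
  have hM : ((s imax - s imin).toNat : ℤ) = s imax - s imin := Int.toNat_of_nonneg (by omega)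
  zify [hle i]
  rw [hm, hM]
  split_ifs with hδ
  · have hp : ((δ j).toNat : ℤ) = δ j := Int.toNat_of_nonneg hδ
    have hq : ((-δ j).toNat : ℤ) = 0 := by simp [hδ]
    rw [hp, hq, h, h]
    ring
  · have hp : ((δ j).toNat : ℤ) = 0 := by simp; omega
    have hq : ((-δ j).toNat : ℤ) = -δ j := Int.toNat_of_nonneg (by omega)
    rw [hp, hq, h, h]
    ring

lemma exists_le_apply_of_injective {ι : Type*} [Fintype ι] {m : ι → ℕ}
    (hm : Function.Injective m) {k : ℕ} (hk : k < Fintype.card ι) : ∃ i, k ≤ m i := by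
  by_contra! h
  have := Fintype.card_le_of_injective (fun i => (⟨m i, h i⟩ : Fin k))
    fun i i' hii' => hm (Fin.ext_iff.mp hii')
  simp at this
  omega

namespace Polynomial

lemma le_natDegree_sum_C_mul_X_pow {K ι : Type*} [Field K] [Fintype ι] {a : ι → K}
    (ha : ∀ i, a i ≠ 0) {m : ι → ℕ} (hm : Function.Injective m) {k : ℕ}
    (hk : k < Fintype.card ι) : k ≤ (∑ i, C (a i) * X ^ m i).natDegree := by
  classical
  obtain ⟨i, hi⟩ := exists_le_apply_of_injective hm hk
  refine hi.trans (le_natDegree_of_ne_zero ?_)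
  rw [finsetSum_coeff, Finset.sum_eq_single i (fun i' _ hi' => by
    simp [hm.ne hi'.symm]) (by simp)]
  simpa using ha i

lemma exists_eq_X_sub_C_mul {K : Type*} [Field K] [IsAlgClosed K] {f : K[X]}
    (hf : f.natDegree ≠ 0) : ∃ r g, f = (X - C r) * g ∧ g.natDegree = f.natDegree - 1 := by
  obtain ⟨r, hr⟩ := IsAlgClosed.exists_root f fun h => hf (natDegree_eq_of_degree_eq_some h)
  exact ⟨r, f /ₘ (X - C r), (mul_divByMonic_eq_iff_isRoot.mpr hr).symm,
    by rw [natDegree_divByMonic _ (monic_X_sub_C r), natDegree_X_sub_C]⟩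

lemma aeval_homogenize_X_sub_C_mul {A R : Type*} [CommRing A] [CommRing R] [Algebra A R]
    (r : A) {g : A[X]} {D : ℕ} (hg : g.natDegree ≤ D) (u v : R) :
    MvPolynomial.aeval ![u, v] (((X - C r) * g).homogenize (D + 1)) =
      (u - algebraMap A R r * v) * MvPolynomial.aeval ![u, v] (g.homogenize D) := by
  rw [add_comm, homogenize_mul _ _ (natDegree_X_sub_C_le r) hg, map_mul, homogenize_sub,
    homogenize_X one_ne_zero, homogenize_C]
  simp

lemma aeval_homogenize_sum_C_mul_X_pow {A R ι : Type*} [CommSemiring A] [CommSemiring R]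
    [Algebra A R] (s : Finset ι) (a : ι → A) (m : ι → ℕ) {M : ℕ} (hm : ∀ i ∈ s, m i ≤ M)
    (u v : R) :
    MvPolynomial.aeval ![u, v] ((∑ i ∈ s, C (a i) * X ^ m i).homogenize M) =
      ∑ i ∈ s, algebraMap A R (a i) * u ^ m i * v ^ (M - m i) := by
  rw [homogenize_finsetSum, map_sum]
  refine Finset.sum_congr rfl fun i hi => ?_
  rw [homogenize_C_mul, homogenize_X_pow (hm i hi)]
  simp [mul_assoc]

theorem exists_not_isUnit_mul_eq_aeval_homogenize {K R : Type*} [Field K] [IsAlgClosed K]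
    [CommRing R] [Algebra K R] {f : K[X]} {M : ℕ} (hf : 2 ≤ f.natDegree) (hM : f.natDegree ≤ M)
    {u v : R} (huv : ∀ r, ¬IsUnit (u - algebraMap K R r * v)) :
    ∃ p q : R, ¬IsUnit p ∧ ¬IsUnit q ∧ MvPolynomial.aeval ![u, v] (f.homogenize M) = p * q := by
  obtain ⟨r₁, g, rfl, hg⟩ := exists_eq_X_sub_C_mul (f := f) (by omega)
  obtain ⟨r₂, h, rfl, hh⟩ := exists_eq_X_sub_C_mul (f := g) (by omega)
  obtain ⟨D, rfl⟩ : ∃ D, M = D + 1 + 1 := ⟨M - 2, by omega⟩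
  rw [aeval_homogenize_X_sub_C_mul r₁ (by omega)]
  refine ⟨_, _, huv r₁, fun hq => huv r₂ ?_, rfl⟩
  rw [aeval_homogenize_X_sub_C_mul r₂ (by omega)] at hq
  exact isUnit_of_mul_isUnit_left hq

end Polynomial

namespace MvPolynomial

lemma prod_X_pow_eq_monomial_equivFunOnFinite {σ R : Type*} [Fintype σ] [CommSemiring R]
    (e : σ → ℕ) : ∏ j, X j ^ e j = monomial (Finsupp.equivFunOnFinite.symm e) (1 : R) := by
  classical
  rw [monomial_eq, Finsupp.prod_fintype] <;> simp

lemma not_isUnit_monomial_sub_C_mul_monomial {σ R : Type*} [CommRing R] [IsReduced R]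
    [Nontrivial R] {a b : σ →₀ ℕ} (ha : a ≠ 0) (hab : a ≠ b) (r : R) :
    ¬IsUnit (monomial a (1 : R) - C r * monomial b 1) := by
  classical
  rw [isUnit_iff_eq_C_of_isReduced]
  rintro ⟨c, -, h⟩
  have := congrArg (coeff a) h
  simp [coeff_monomial, coeff_C, Ne.symm hab, Ne.symm ha] at this

lemma not_isUnit_prod_X_pow_sub_C_mul_prod_X_pow {σ R : Type*} [Fintype σ] [CommRing R]
    [IsReduced R] [Nontrivial R] {d e : σ → ℕ} (hd : d ≠ 0) (hde : d ≠ e) (r : R) :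
    ¬IsUnit (∏ j, X j ^ d j - C r * ∏ j, X j ^ e j) := by
  simp only [prod_X_pow_eq_monomial_equivFunOnFinite]
  exact not_isUnit_monomial_sub_C_mul_monomial
    (fun h => hd (by simpa using congrArg (⇑) h))
    (Finsupp.equivFunOnFinite.symm.injective.ne hde) r

lemma sum_C_mul_prod_X_pow_eq_mul_aeval_homogenize {σ ι R : Type*} [Fintype σ] [CommSemiring R]
    (s : Finset ι) (a : ι → R) (γ : ι → σ → ℕ) (b d e : σ → ℕ) (m : ι → ℕ) {M : ℕ}
    (hm : ∀ i ∈ s, m i ≤ M) (hγ : ∀ i j, γ i j = b j + m i * d j + (M - m i) * e j) :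
    ∑ i ∈ s, C (a i) * ∏ j, X j ^ γ i j =
      (∏ j, X j ^ b j) * aeval ![∏ j, X j ^ d j, ∏ j, X j ^ e j]
        ((∑ i ∈ s, Polynomial.C (a i) * Polynomial.X ^ m i).homogenize M) := by
  rw [Polynomial.aeval_homogenize_sum_C_mul_X_pow s a m hm, Finset.mul_sum]
  refine Finset.sum_congr rfl fun i _ => ?_
  simp only [hγ, pow_add, pow_mul', Finset.prod_mul_distrib, Finset.prod_pow, algebraMap_eq]
  ring

end MvPolynomial

theorem generic_polynomial_reducible_of_collinear_general
    {k : Type*} [Field k] (N n : ℕ) (hN : 3 ≤ N)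
    (γ : Fin N → Fin n → ℕ) (hγ : Function.Injective γ)
    (hline : Collinear ℝ (Set.range fun i => fun j => (γ i j : ℝ))) :
    ∃ p q : MvPolynomial (Fin n)
        (AlgebraicClosure (FractionRing (MvPolynomial (Fin N) k))),
      ¬ IsUnit p ∧ ¬ IsUnit q ∧
      (∑ i : Fin N,
        MvPolynomial.C (algebraMap (FractionRing (MvPolynomial (Fin N) k))
            (AlgebraicClosure (FractionRing (MvPolynomial (Fin N) k)))
            (algebraMap (MvPolynomial (Fin N) k) _ (MvPolynomial.X i))) *
          ∏ j : Fin n, MvPolynomial.X j ^ γ i j) = p * q := by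
  have hA : ∀ i : Fin N, algebraMap (FractionRing (MvPolynomial (Fin N) k))
      (AlgebraicClosure (FractionRing (MvPolynomial (Fin N) k)))
      (algebraMap (MvPolynomial (Fin N) k) _ (X i)) ≠ 0 := by
    simp [X_ne_zero]
  have : Nonempty (Fin N) := ⟨⟨0, by omega⟩⟩
  obtain ⟨δ, s, ⟨j₀, hj₀⟩, hs⟩ := exists_eq_add_mul_of_collinear γ
    (hγ.ne (a₁ := ⟨1, by omega⟩) (a₂ := ⟨0, by omega⟩) (by simp)) hline
  obtain ⟨b, m, M, hmM, hγm⟩ := exists_eq_add_mul_toNat_add_mul_toNat γ _ δ s hs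
  have hm : Function.Injective m := fun i i' h => hγ (funext fun j => by rw [hγm, hγm, h])
  obtain ⟨p, q, hp, hq, hpq⟩ := Polynomial.exists_not_isUnit_mul_eq_aeval_homogenize
    (R := MvPolynomial (Fin n) _)
    (Polynomial.le_natDegree_sum_C_mul_X_pow hA hm (by simp; omega))
    (Polynomial.natDegree_sum_le_of_forall_le _ _ fun i _ =>
      (Polynomial.natDegree_C_mul_X_pow_le _ _).trans (hmM i))
    (u := ∏ j, X j ^ (δ j).toNat) (v := ∏ j, X j ^ (-δ j).toNat) fun r => by
      rw [algebraMap_eq]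
      exact not_isUnit_prod_X_pow_sub_C_mul_prod_X_pow
        (Function.ne_iff.mpr ⟨j₀, show (δ j₀).toNat ≠ 0 by omega⟩)
        (Function.ne_iff.mpr ⟨j₀, show (δ j₀).toNat ≠ (-δ j₀).toNat by omega⟩) r
  refine ⟨p, (∏ j, X j ^ b j) * q, hp, fun h => hq (isUnit_of_mul_isUnit_right h), ?_⟩
  rw [sum_C_mul_prod_X_pow_eq_mul_aeval_homogenize _ _ γ b _ _ m (fun i _ => hmM i) hγm, hpq]
  ring

/-- If the exponent set `Γ ⊂ ℕ^n` (`N ≥ 3` distinct vectors, componentwise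
minimum `0`) is contained in an affine line, then the generic polynomial
`P(Y, Γ) = Σ A_i Y^{γ_i}` is reducible over the algebraic closure of
`k(A_1, ..., A_N)`. -/
theorem generic_polynomial_reducible_of_collinear
    {k : Type*} [Field k] (N n : ℕ) (hN : 3 ≤ N)
    (γ : Fin N → Fin n → ℕ) (hγ : Function.Injective γ)
    (hmin : ∀ j, ∃ i, γ i j = 0)
    (hline : Collinear ℝ (Set.range fun i => fun j => (γ i j : ℝ))) :
    ∃ p q : MvPolynomial (Fin n)
        (AlgebraicClosure (FractionRing (MvPolynomial (Fin N) k))),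
      ¬ IsUnit p ∧ ¬ IsUnit q ∧
      (∑ i : Fin N,
        MvPolynomial.C (algebraMap (FractionRing (MvPolynomial (Fin N) k))
            (AlgebraicClosure (FractionRing (MvPolynomial (Fin N) k)))
            (algebraMap (MvPolynomial (Fin N) k) _ (MvPolynomial.X i))) *
          ∏ j : Fin n, MvPolynomial.X j ^ γ i j) = p * q :=
  generic_polynomial_reducible_of_collinear_general N n hN γ hγ hline
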